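/- arXiv:1609.00606 — 3 statements merged into one kernel-verified Lean document; each statement's English description precedes it below -/
import Mathlib

section
/- Assume the V structure. Let c ∈ {0,1} with P(C=c) > 0. Then cov(X, Y | C=c) = [ P(X=1)·P(X=0)·P(Y=1)·P(Y=0) · ( p_{c|00}·p_{c|11} − p_{c|10}·p_{c|01} ) ] / P(C=c)^2. -/
/-!
Write `m x y := P(C = c, X = x, Y = y)`. For binary `X`, `Y` the conditional covariance given
`C = c` is `(m 1 1 * Σ m - (m 1 1 + m 1 0) (m 1 1 + m 0 1)) / P(C = c)^2`, whose numerator is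
`m 0 0 * m 1 1 - m 1 0 * m 0 1`. By the multiplication rule and independence of `X` and `Y`,
`m x y = P(X = x) P(Y = y) p_{c|xy}`, which turns this cross-difference into the stated one.
-/

open MeasureTheory ProbabilityTheory

variable {Ω : Type*} [MeasurableSpace Ω]

/-- The event that the random variable `X` takes the value `x`. -/
def ev (X : Ω → ℝ) (x : ℝ) : Set Ω := {ω | X ω = x}

/-- The probability of an event, as a real number. -/
noncomputable def pr (P : Measure Ω) (s : Set Ω) : ℝ := (P s).toReal

/-- The conditional probability `P(s | t)`, as a real number. -/
noncomputable def cpr (P : Measure Ω) (s t : Set Ω) : ℝ := pr (P[|t]) s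

/-- The covariance of two real-valued random variables. -/
noncomputable def rcov (P : Measure Ω) (X Y : Ω → ℝ) : ℝ :=
  ∫ ω, (X ω - ∫ ω', X ω' ∂P) * (Y ω - ∫ ω', Y ω' ∂P) ∂P

/-- The conditional covariance of two real-valued random variables given an event. -/
noncomputable def covCond (P : Measure Ω) (X Y : Ω → ℝ) (t : Set Ω) : ℝ :=
  rcov (P[|t]) X Y

/-- The conditional variance of a real-valued random variable given an event. -/
noncomputable def varCond (P : Measure Ω) (X : Ω → ℝ) (t : Set Ω) : ℝ :=
  covCond P X X t

/-- A measurable `{0,1}`-valued random variable. -/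
def IsBin (X : Ω → ℝ) : Prop := Measurable X ∧ ∀ ω, X ω = 0 ∨ X ω = 1

namespace IsBin

variable {X Y : Ω → ℝ}

lemma measurableSet_ev (hX : IsBin X) (x : ℝ) : MeasurableSet (ev X x) :=
  hX.1 (measurableSet_singleton x)

lemma eq_indicator (hX : IsBin X) : X = (ev X 1).indicator 1 := by
  funext ω
  rcases hX.2 ω with h | h <;> simp [ev, h]

lemma mul_eq_indicator (hX : IsBin X) (hY : IsBin Y) :
    X * Y = (ev X 1 ∩ ev Y 1).indicator 1 := by
  funext ω
  rcases hX.2 ω with h | h <;> rcases hY.2 ω with h' | h' <;> simp [ev, h, h']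

lemma memLp (hX : IsBin X) (μ : Measure Ω) [IsFiniteMeasure μ] (p : ENNReal) : MemLp X p μ := by
  rw [hX.eq_indicator]
  exact memLp_indicator_const p (hX.measurableSet_ev 1) 1 (Or.inr (measure_ne_top μ _))

lemma integral_eq_pr (hX : IsBin X) (μ : Measure Ω) : μ[X] = pr μ (ev X 1) := by
  conv_lhs => rw [hX.eq_indicator]
  exact integral_indicator_one (hX.measurableSet_ev 1)

lemma integral_mul_eq_pr (hX : IsBin X) (hY : IsBin Y) (μ : Measure Ω) :
    μ[X * Y] = pr μ (ev X 1 ∩ ev Y 1) := by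
  rw [hX.mul_eq_indicator hY]
  exact integral_indicator_one ((hX.measurableSet_ev 1).inter (hY.measurableSet_ev 1))

lemma pr_inter_add_pr_inter (hX : IsBin X) (P : Measure Ω) [IsFiniteMeasure P] (A : Set Ω) :
    pr P (A ∩ ev X 1) + pr P (A ∩ ev X 0) = pr P A := by
  have hcompl : A ∩ ev X 0 = A \ ev X 1 := by
    ext ω
    rcases hX.2 ω with h | h <;> simp [ev, h]
  rw [hcompl]
  exact measureReal_inter_add_sdiff (hX.measurableSet_ev 1)

lemma rcov_eq (hX : IsBin X) (hY : IsBin Y) (μ : Measure Ω) [IsProbabilityMeasure μ] :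
    rcov μ X Y = pr μ (ev X 1 ∩ ev Y 1) - pr μ (ev X 1) * pr μ (ev Y 1) := by
  rw [show rcov μ X Y = cov[X, Y; μ] from rfl, covariance_eq_sub (hX.memLp μ 2) (hY.memLp μ 2),
    hX.integral_mul_eq_pr hY, hX.integral_eq_pr, hY.integral_eq_pr]

end IsBin

lemma pr_cond {P : Measure Ω} {s : Set Ω} (hs : MeasurableSet s) (t : Set Ω) :
    pr (P[|t]) s = pr P (t ∩ s) / pr P t := by
  rw [pr, cond_apply' hs, ENNReal.toReal_mul, ENNReal.toReal_inv, div_eq_inv_mul, pr, pr]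

lemma cpr_mul_pr (P : Measure Ω) [IsFiniteMeasure P] {s : Set Ω} (hs : MeasurableSet s)
    (t : Set Ω) : cpr P t s * pr P s = pr P (s ∩ t) := by
  rw [cpr, pr, pr, pr, ← ENNReal.toReal_mul, cond_mul_eq_inter hs]

lemma ProbabilityTheory.IndepFun.pr_ev_inter_ev {P : Measure Ω} {X Y : Ω → ℝ}
    (h : IndepFun X Y P) (x y : ℝ) :
    pr P (ev X x ∩ ev Y y) = pr P (ev X x) * pr P (ev Y y) := by
  rw [pr, pr, pr, ← ENNReal.toReal_mul]
  exact congrArg ENNReal.toReal <|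
    h.measure_inter_preimage_eq_mul _ _ (measurableSet_singleton x) (measurableSet_singleton y)

lemma covCond_eq_of_isBin {P : Measure Ω} [IsFiniteMeasure P] {X Y : Ω → ℝ} (hX : IsBin X)
    (hY : IsBin Y) {t : Set Ω} (ht : P t ≠ 0) :
    covCond P X Y t =
      (pr P (t ∩ ev X 1 ∩ ev Y 1) * pr P t - pr P (t ∩ ev X 1) * pr P (t ∩ ev Y 1)) /
        pr P t ^ 2 := by
  have : IsProbabilityMeasure (P[|t]) := cond_isProbabilityMeasure ht
  have hpr : pr P t ≠ 0 := ENNReal.toReal_ne_zero.2 ⟨ht, measure_ne_top P t⟩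
  rw [covCond, hX.rcov_eq hY, pr_cond ((hX.measurableSet_ev 1).inter (hY.measurableSet_ev 1)),
    pr_cond (hX.measurableSet_ev 1), pr_cond (hY.measurableSet_ev 1), ← Set.inter_assoc]
  field_simp

theorem V_bias_cov_general (P : Measure Ω) [IsProbabilityMeasure P]
    (X Y C : Ω → ℝ) (hX : IsBin X) (hY : IsBin Y)
    (hindep : IndepFun X Y P)
    (c : ℝ) (hCc : 0 < pr P (ev C c)) :
    covCond P X Y (ev C c) =
      pr P (ev X 1) * pr P (ev X 0) * pr P (ev Y 1) * pr P (ev Y 0) *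
        (cpr P (ev C c) (ev X 0 ∩ ev Y 0) * cpr P (ev C c) (ev X 1 ∩ ev Y 1) -
          cpr P (ev C c) (ev X 1 ∩ ev Y 0) * cpr P (ev C c) (ev X 0 ∩ ev Y 1)) /
        (pr P (ev C c)) ^ 2 := by
  set t := ev C c
  have ht : P t ≠ 0 := fun h => by simp [pr, h] at hCc
  have cell (x y : ℝ) :
      pr P (ev X x) * pr P (ev Y y) * cpr P t (ev X x ∩ ev Y y) = pr P (t ∩ ev X x ∩ ev Y y) := by
    rw [← hindep.pr_ev_inter_ev, mul_comm,
      cpr_mul_pr P ((hX.measurableSet_ev x).inter (hY.measurableSet_ev y)), Set.inter_comm,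
      Set.inter_assoc]
  have hX1t := hY.pr_inter_add_pr_inter P (t ∩ ev X 1)
  have hX0t := hY.pr_inter_add_pr_inter P (t ∩ ev X 0)
  have hY1t : pr P (t ∩ ev X 1 ∩ ev Y 1) + pr P (t ∩ ev X 0 ∩ ev Y 1) = pr P (t ∩ ev Y 1) := by
    simpa only [Set.inter_right_comm t (ev Y 1)] using hX.pr_inter_add_pr_inter P (t ∩ ev Y 1)
  rw [covCond_eq_of_isBin hX hY ht]
  congr 1
  rw [← hY1t, ← hX.pr_inter_add_pr_inter P t, ← hX1t, ← hX0t, ← cell 0 0, ← cell 1 1, ← cell 1 0,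
    ← cell 0 1]
  ring

/-- V-bias on the covariance scale, conditioning on `C = c`. -/
theorem V_bias_cov (P : Measure Ω) [IsProbabilityMeasure P]
    (X Y C : Ω → ℝ) (hX : IsBin X) (hY : IsBin Y) (hC : IsBin C)
    (hindep : IndepFun X Y P)
    (hX1 : 0 < pr P (ev X 1)) (hX1' : pr P (ev X 1) < 1)
    (hY1 : 0 < pr P (ev Y 1)) (hY1' : pr P (ev Y 1) < 1)
    (c : ℝ) (hc : c = 0 ∨ c = 1) (hCc : 0 < pr P (ev C c)) :
    covCond P X Y (ev C c) =
      pr P (ev X 1) * pr P (ev X 0) * pr P (ev Y 1) * pr P (ev Y 0) *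
        (cpr P (ev C c) (ev X 0 ∩ ev Y 0) * cpr P (ev C c) (ev X 1 ∩ ev Y 1) -
          cpr P (ev C c) (ev X 1 ∩ ev Y 0) * cpr P (ev C c) (ev X 0 ∩ ev Y 1)) /
        (pr P (ev C c)) ^ 2 :=
  V_bias_cov_general P X Y C hX hY hindep c hCc
end

section
/- Assume the V structure. Let c ∈ {0,1} with P(X=1, C=c) > 0 and P(X=0, C=c) > 0. Then P(Y=1 | X=1, C=c) − P(Y=1 | X=0, C=c) = P(Y=1)·P(Y=0) · ( p_{c|00}·p_{c|11} − p_{c|10}·p_{c|01} ) / [ ( P(Y=1)·p_{c|11} + P(Y=0)·p_{c|10} ) · ( P(Y=1)·p_{c|01} + P(Y=0)·p_{c|00} ) ]. -/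
open MeasureTheory ProbabilityTheory

variable {Ω : Type*} [MeasurableSpace Ω]

lemma pr_nonneg (P : Measure Ω) (s : Set Ω) : 0 ≤ pr P s := ENNReal.toReal_nonneg

lemma meas_ev {X : Ω → ℝ} (hX : IsBin X) (x : ℝ) : MeasurableSet (ev X x) :=
  hX.1 (measurableSet_singleton x)

lemma cpr_eq (P : Measure Ω) [IsFiniteMeasure P] {t : Set Ω} (s : Set Ω)
    (ht : MeasurableSet t) : cpr P s t = pr P (t ∩ s) / pr P t := by
  unfold cpr pr
  rw [ProbabilityTheory.cond_apply ht, ENNReal.toReal_mul, ENNReal.toReal_inv]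
  ring

lemma ev_zero_eq_compl {Y : Ω → ℝ} (hY : IsBin Y) : ev Y 0 = (ev Y 1)ᶜ := by
  ext ω
  have := hY.2 ω
  simp only [ev, Set.mem_setOf_eq, Set.mem_compl_iff]
  constructor
  · intro h h1; rw [h1] at h; norm_num at h
  · intro h; tauto

lemma pr_compl (P : Measure Ω) [IsProbabilityMeasure P] {Y : Ω → ℝ} (hY : IsBin Y) :
    pr P (ev Y 0) = 1 - pr P (ev Y 1) := by
  rw [ev_zero_eq_compl hY]
  unfold pr
  rw [measure_compl (meas_ev hY 1) (measure_ne_top P _), measure_univ,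
    ENNReal.toReal_sub_of_le (prob_le_one) (by simp)]
  simp

lemma pr_split (P : Measure Ω) [IsProbabilityMeasure P] (A : Set Ω) {Y : Ω → ℝ}
    (hY : IsBin Y) : pr P A = pr P (A ∩ ev Y 1) + pr P (A ∩ ev Y 0) := by
  have hd : A ∩ ev Y 0 = A \ ev Y 1 := by
    rw [ev_zero_eq_compl hY, Set.diff_eq]
  rw [hd]
  unfold pr
  rw [← ENNReal.toReal_add (measure_ne_top P _) (measure_ne_top P _),
    measure_inter_add_diff A (meas_ev hY 1)]

lemma pr_indep (P : Measure Ω) {X Y : Ω → ℝ} (hX : IsBin X) (hY : IsBin Y)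
    (hindep : IndepFun X Y P) (x y : ℝ) :
    pr P (ev X x ∩ ev Y y) = pr P (ev X x) * pr P (ev Y y) := by
  have h := hindep.measure_inter_preimage_eq_mul {x} {y}
    (measurableSet_singleton x) (measurableSet_singleton y)
  unfold pr
  have hx : ev X x = X ⁻¹' {x} := rfl
  have hy : ev Y y = Y ⁻¹' {y} := rfl
  rw [hx, hy, h, ENNReal.toReal_mul]

/-- V-bias on the risk difference scale, conditioning on `C = c`. -/
theorem V_bias_rd (P : Measure Ω) [IsProbabilityMeasure P]
    (X Y C : Ω → ℝ) (hX : IsBin X) (hY : IsBin Y) (hC : IsBin C)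
    (hindep : IndepFun X Y P)
    (hX1 : 0 < pr P (ev X 1)) (hX1' : pr P (ev X 1) < 1)
    (hY1 : 0 < pr P (ev Y 1)) (hY1' : pr P (ev Y 1) < 1)
    (c : ℝ) (hc : c = 0 ∨ c = 1)
    (h1 : 0 < pr P (ev X 1 ∩ ev C c)) (h0 : 0 < pr P (ev X 0 ∩ ev C c)) :
    cpr P (ev Y 1) (ev X 1 ∩ ev C c) - cpr P (ev Y 1) (ev X 0 ∩ ev C c) =
      pr P (ev Y 1) * pr P (ev Y 0) *
        (cpr P (ev C c) (ev X 0 ∩ ev Y 0) * cpr P (ev C c) (ev X 1 ∩ ev Y 1) -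
          cpr P (ev C c) (ev X 1 ∩ ev Y 0) * cpr P (ev C c) (ev X 0 ∩ ev Y 1)) /
        ((pr P (ev Y 1) * cpr P (ev C c) (ev X 1 ∩ ev Y 1) +
            pr P (ev Y 0) * cpr P (ev C c) (ev X 1 ∩ ev Y 0)) *
          (pr P (ev Y 1) * cpr P (ev C c) (ev X 0 ∩ ev Y 1) +
            pr P (ev Y 0) * cpr P (ev C c) (ev X 0 ∩ ev Y 0))) := by
  -- notation
  set px1 := pr P (ev X 1) with hpx1
  set py1 := pr P (ev Y 1) with hpy1
  set px0 := pr P (ev X 0) with hpx0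
  set py0 := pr P (ev Y 0) with hpy0
  have hpx0v : px0 = 1 - px1 := pr_compl P hX
  have hpy0v : py0 = 1 - py1 := pr_compl P hY
  have hx0pos : 0 < px0 := by rw [hpx0v]; linarith
  have hy0pos : 0 < py0 := by rw [hpy0v]; linarith
  -- q_{xy} := P(X=x, Y=y, C=c)
  set q11 := pr P (ev X 1 ∩ ev Y 1 ∩ ev C c) with hq11
  set q10 := pr P (ev X 1 ∩ ev Y 0 ∩ ev C c) with hq10
  set q01 := pr P (ev X 0 ∩ ev Y 1 ∩ ev C c) with hq01
  set q00 := pr P (ev X 0 ∩ ev Y 0 ∩ ev C c) with hq00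
  have hq11n : 0 ≤ q11 := pr_nonneg _ _
  have hq10n : 0 ≤ q10 := pr_nonneg _ _
  have hq01n : 0 ≤ q01 := pr_nonneg _ _
  have hq00n : 0 ≤ q00 := pr_nonneg _ _
  -- splitting X=x ∩ C=c over Y
  have hsplit1 : pr P (ev X 1 ∩ ev C c) = q11 + q10 := by
    rw [pr_split P _ hY, hq11, hq10]
    congr 1 <;> · congr 1; ext ω; simp only [Set.mem_inter_iff, ev, Set.mem_setOf_eq]; tauto
  have hsplit0 : pr P (ev X 0 ∩ ev C c) = q01 + q00 := by
    rw [pr_split P _ hY, hq01, hq00]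
    congr 1 <;> · congr 1; ext ω; simp only [Set.mem_inter_iff, ev, Set.mem_setOf_eq]; tauto
  have hs1 : 0 < q11 + q10 := by rw [← hsplit1]; exact h1
  have hs0 : 0 < q01 + q00 := by rw [← hsplit0]; exact h0
  -- conditional probabilities of Y=1 given X=x, C=c
  have mXC1 : MeasurableSet (ev X 1 ∩ ev C c) := (meas_ev hX 1).inter (meas_ev hC c)
  have mXC0 : MeasurableSet (ev X 0 ∩ ev C c) := (meas_ev hX 0).inter (meas_ev hC c)
  have hL1 : cpr P (ev Y 1) (ev X 1 ∩ ev C c) = q11 / (q11 + q10) := by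
    rw [cpr_eq P _ mXC1, hsplit1, hq11]
    congr 2
    ext ω; simp only [Set.mem_inter_iff, ev, Set.mem_setOf_eq]; tauto
  have hL0 : cpr P (ev Y 1) (ev X 0 ∩ ev C c) = q01 / (q01 + q00) := by
    rw [cpr_eq P _ mXC0, hsplit0, hq01]
    congr 2
    ext ω; simp only [Set.mem_inter_iff, ev, Set.mem_setOf_eq]; tauto
  -- conditional probabilities of C=c given X=x, Y=y
  have key : ∀ x y : ℝ, cpr P (ev C c) (ev X x ∩ ev Y y) =
      pr P (ev X x ∩ ev Y y ∩ ev C c) / (pr P (ev X x) * pr P (ev Y y)) := by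
    intro x y
    rw [cpr_eq P _ ((meas_ev hX x).inter (meas_ev hY y)),
      pr_indep P hX hY hindep x y]
  have hC11 : cpr P (ev C c) (ev X 1 ∩ ev Y 1) = q11 / (px1 * py1) := key 1 1
  have hC10 : cpr P (ev C c) (ev X 1 ∩ ev Y 0) = q10 / (px1 * py0) := key 1 0
  have hC01 : cpr P (ev C c) (ev X 0 ∩ ev Y 1) = q01 / (px0 * py1) := key 0 1
  have hC00 : cpr P (ev C c) (ev X 0 ∩ ev Y 0) = q00 / (px0 * py0) := key 0 0
  rw [hL1, hL0, hC11, hC10, hC01, hC00]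
  have hA : py1 * (q11 / (px1 * py1)) + py0 * (q10 / (px1 * py0)) = (q11 + q10) / px1 := by
    field_simp
  have hB : py1 * (q01 / (px0 * py1)) + py0 * (q00 / (px0 * py0)) = (q01 + q00) / px0 := by
    field_simp
  rw [hA, hB]
  have h1' := ne_of_gt hs1
  have h0' := ne_of_gt hs0
  have hx1' := ne_of_gt hX1
  have hx0' := ne_of_gt hx0pos
  have hy1' := ne_of_gt hY1
  have hy0' := ne_of_gt hy0pos
  field_simp
  ring
end

section
/- Assume the Y structure. Let d ∈ {0,1} with P(X=1, D=d) > 0 and P(X=0, D=d) > 0. Then P(Y=1 | X=1, D=d) − P(Y=1 | X=0, D=d) = P(Y=1)·P(Y=0) · ( p_{d|1} − p_{d|0} ) · [ p_{d|1}·( p_{C=1|00}·p_{C=1|11} − p_{C=1|10}·p_{C=1|01} ) − p_{d|0}·( p_{C=0|00}·p_{C=0|11} − p_{C=0|10}·p_{C=0|01} ) ] / ( [ P(Y=1)·( p_{C=1|11}·p_{d|1} + p_{C=0|11}·p_{d|0} ) + P(Y=0)·( p_{C=1|10}·p_{d|1} + p_{C=0|10}·p_{d|0} ) ] · [ P(Y=1)·(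 p_{C=1|01}·p_{d|1} + p_{C=0|01}·p_{d|0} ) + P(Y=0)·( p_{C=1|00}·p_{d|1} + p_{C=0|00}·p_{d|0} ) ] ). -/
open MeasureTheory ProbabilityTheory

variable {Ω : Type*} [MeasurableSpace Ω]

lemma cpr_eq_div {P : Measure Ω} {s : Set Ω} (hs : MeasurableSet s) (t : Set Ω) :
    cpr P s t = pr P (t ∩ s) / pr P t := by
  rw [cpr, pr, pr, pr, cond_apply' hs, ENNReal.toReal_mul, ENNReal.toReal_inv, div_eq_inv_mul]

namespace IsBin

variable {P : Measure Ω} {C : Ω → ℝ}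

lemma measurableSet_ev_s12 (hC : IsBin C) (c : ℝ) : MeasurableSet (ev C c) :=
  hC.1 (measurableSet_singleton c)

lemma ev_one_eq_compl (hC : IsBin C) : ev C 1 = (ev C 0)ᶜ := by
  ext ω
  rcases hC.2 ω with h | h <;> simp [ev, h]

lemma pr_eq_add [IsFiniteMeasure P] (hC : IsBin C) (t : Set Ω) :
    pr P t = pr P (t ∩ ev C 0) + pr P (t ∩ ev C 1) := by
  rw [hC.ev_one_eq_compl, ← Set.sdiff_eq]
  exact (measureReal_inter_add_sdiff (hC.measurableSet_ev_s12 0)).symm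

lemma pr_ev_zero_add_pr_ev_one [IsFiniteMeasure P] (hC : IsBin C) :
    pr P (ev C 0) + pr P (ev C 1) = P.real Set.univ := by
  have h := (hC.pr_eq_add (P := P) Set.univ).symm
  rwa [Set.univ_inter, Set.univ_inter] at h

lemma pr_ev_zero_add_one [IsProbabilityMeasure P] (hC : IsBin C) :
    pr P (ev C 0) + pr P (ev C 1) = 1 := by
  rw [hC.pr_ev_zero_add_pr_ev_one, probReal_univ]

lemma cpr_add_le_one (hC : IsBin C) (t : Set Ω) : cpr P (ev C 0) t + cpr P (ev C 1) t ≤ 1 := by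
  rw [cpr, cpr, hC.pr_ev_zero_add_pr_ev_one]
  exact measureReal_le_one

lemma cpr_ev_zero_eq [IsFiniteMeasure P] (hC : IsBin C) {t : Set Ω} (ht : pr P t ≠ 0) :
    cpr P (ev C 0) t = 1 - cpr P (ev C 1) t := by
  have : IsProbabilityMeasure P[|t] :=
    cond_isProbabilityMeasure fun h ↦ ht (by simp [pr, h])
  rw [eq_sub_iff_add_eq, cpr, cpr, hC.pr_ev_zero_add_one]

end IsBin

def IsYStructure (P : Measure Ω) (X Y C D : Ω → ℝ) : Prop :=
  ∀ x y γ d : ℝ, (x = 0 ∨ x = 1) → (y = 0 ∨ y = 1) → (γ = 0 ∨ γ = 1) → (d = 0 ∨ d = 1) →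
    pr P (ev X x ∩ ev Y y ∩ ev C γ ∩ ev D d) =
      pr P (ev X x) * pr P (ev Y y) * cpr P (ev C γ) (ev X x ∩ ev Y y) * cpr P (ev D d) (ev C γ)

/-- `P(D = d | X = x, Y = y)` under the Y structure, as a mixture over `C`. -/
noncomputable def condProbD (P : Measure Ω) (X Y C D : Ω → ℝ) (x y d : ℝ) : ℝ :=
  cpr P (ev C 1) (ev X x ∩ ev Y y) * cpr P (ev D d) (ev C 1) +
    cpr P (ev C 0) (ev X x ∩ ev Y y) * cpr P (ev D d) (ev C 0)

namespace IsYStructure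

variable {P : Measure Ω} {X Y C D : Ω → ℝ} {x y d : ℝ}

lemma pr_inter_inter_ev [IsFiniteMeasure P] (h : IsYStructure P X Y C D) (hC : IsBin C)
    (hx : x = 0 ∨ x = 1) (hy : y = 0 ∨ y = 1) (hd : d = 0 ∨ d = 1) :
    pr P (ev X x ∩ ev Y y ∩ ev D d) =
      pr P (ev X x) * pr P (ev Y y) * condProbD P X Y C D x y d := by
  rw [hC.pr_eq_add, Set.inter_right_comm _ (ev D d), Set.inter_right_comm _ (ev D d),
    h x y 0 d hx hy (.inl rfl) hd, h x y 1 d hx hy (.inr rfl) hd, condProbD]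
  ring

lemma pr_inter_ev_le_mul [IsFiniteMeasure P] (h : IsYStructure P X Y C D) (hC : IsBin C)
    (hD : IsBin D) (hx : x = 0 ∨ x = 1) (hy : y = 0 ∨ y = 1) :
    pr P (ev X x ∩ ev Y y) ≤ pr P (ev X x) * pr P (ev Y y) := by
  have hpxy : 0 ≤ pr P (ev X x) * pr P (ev Y y) := mul_nonneg (pr_nonneg _ _) (pr_nonneg _ _)
  have hcell : ∀ γ : ℝ, (γ = 0 ∨ γ = 1) → pr P (ev X x ∩ ev Y y ∩ ev C γ) ≤
      pr P (ev X x) * pr P (ev Y y) * cpr P (ev C γ) (ev X x ∩ ev Y y) := fun γ hγ ↦ by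
    rw [hD.pr_eq_add, h x y γ 0 hx hy hγ (.inl rfl), h x y γ 1 hx hy hγ (.inr rfl), ← mul_add]
    exact mul_le_of_le_one_right (mul_nonneg hpxy (pr_nonneg _ _)) (hD.cpr_add_le_one _)
  calc pr P (ev X x ∩ ev Y y)
      ≤ pr P (ev X x) * pr P (ev Y y) *
          (cpr P (ev C 0) (ev X x ∩ ev Y y) + cpr P (ev C 1) (ev X x ∩ ev Y y)) := by
        rw [hC.pr_eq_add, mul_add]
        exact add_le_add (hcell 0 (.inl rfl)) (hcell 1 (.inr rfl))
    _ ≤ pr P (ev X x) * pr P (ev Y y) := mul_le_of_le_one_right hpxy (hC.cpr_add_le_one _)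

lemma pr_inter_ev_eq_mul [IsProbabilityMeasure P] (h : IsYStructure P X Y C D) (hY : IsBin Y)
    (hC : IsBin C) (hD : IsBin D) (hx : x = 0 ∨ x = 1) (hy : y = 0 ∨ y = 1) :
    pr P (ev X x ∩ ev Y y) = pr P (ev X x) * pr P (ev Y y) := by
  have hle₀ := h.pr_inter_ev_le_mul hC hD hx (.inl rfl)
  have hle₁ := h.pr_inter_ev_le_mul hC hD hx (.inr rfl)
  have hsum : pr P (ev X x ∩ ev Y 0) + pr P (ev X x ∩ ev Y 1) =
      pr P (ev X x) * pr P (ev Y 0) + pr P (ev X x) * pr P (ev Y 1) := by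
    rw [← hY.pr_eq_add, ← mul_add, hY.pr_ev_zero_add_one, mul_one]
  rcases hy with rfl | rfl <;> linarith

lemma cpr_ev_zero_eq [IsProbabilityMeasure P] (h : IsYStructure P X Y C D) (hY : IsBin Y)
    (hC : IsBin C) (hD : IsBin D) (hx : x = 0 ∨ x = 1) (hy : y = 0 ∨ y = 1)
    (hpx : pr P (ev X x) ≠ 0) (hpy : pr P (ev Y y) ≠ 0) :
    cpr P (ev C 0) (ev X x ∩ ev Y y) = 1 - cpr P (ev C 1) (ev X x ∩ ev Y y) :=
  hC.cpr_ev_zero_eq (by rw [h.pr_inter_ev_eq_mul hY hC hD hx hy]; exact mul_ne_zero hpx hpy)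

lemma pr_inter_ev [IsFiniteMeasure P] (h : IsYStructure P X Y C D) (hY : IsBin Y) (hC : IsBin C)
    (hx : x = 0 ∨ x = 1) (hd : d = 0 ∨ d = 1) :
    pr P (ev X x ∩ ev D d) = pr P (ev X x) *
      (pr P (ev Y 1) * condProbD P X Y C D x 1 d + pr P (ev Y 0) * condProbD P X Y C D x 0 d) := by
  rw [hY.pr_eq_add, Set.inter_right_comm _ (ev D d), Set.inter_right_comm _ (ev D d),
    h.pr_inter_inter_ev hC hx (.inl rfl) hd, h.pr_inter_inter_ev hC hx (.inr rfl) hd]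
  ring

lemma cpr_ev_one [IsFiniteMeasure P] (h : IsYStructure P X Y C D) (hY : IsBin Y) (hC : IsBin C)
    (hx : x = 0 ∨ x = 1) (hd : d = 0 ∨ d = 1) (hpx : pr P (ev X x) ≠ 0) :
    cpr P (ev Y 1) (ev X x ∩ ev D d) = pr P (ev Y 1) * condProbD P X Y C D x 1 d /
      (pr P (ev Y 1) * condProbD P X Y C D x 1 d + pr P (ev Y 0) * condProbD P X Y C D x 0 d) := by
  rw [cpr_eq_div (hY.measurableSet_ev_s12 1), Set.inter_right_comm,
    h.pr_inter_inter_ev hC hx (.inr rfl) hd, h.pr_inter_ev hY hC hx hd, mul_assoc,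
    mul_div_mul_left _ _ hpx]

end IsYStructure

theorem Y_bias_rd_general (P : Measure Ω) [IsProbabilityMeasure P]
    (X Y C D : Ω → ℝ) (hY : IsBin Y) (hC : IsBin C) (hD : IsBin D)
    (hY1 : 0 < pr P (ev Y 1)) (hY1' : pr P (ev Y 1) < 1)
    (hfact : ∀ x y γ d : ℝ, (x = 0 ∨ x = 1) → (y = 0 ∨ y = 1) → (γ = 0 ∨ γ = 1) →
      (d = 0 ∨ d = 1) →
      pr P (ev X x ∩ ev Y y ∩ ev C γ ∩ ev D d) =
        pr P (ev X x) * pr P (ev Y y) * cpr P (ev C γ) (ev X x ∩ ev Y y) *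
          cpr P (ev D d) (ev C γ))
    (d : ℝ) (hd : d = 0 ∨ d = 1)
    (h1 : 0 < pr P (ev X 1 ∩ ev D d)) (h0 : 0 < pr P (ev X 0 ∩ ev D d)) :
    cpr P (ev Y 1) (ev X 1 ∩ ev D d) - cpr P (ev Y 1) (ev X 0 ∩ ev D d) =
      pr P (ev Y 1) * pr P (ev Y 0) *
        (cpr P (ev D d) (ev C 1) - cpr P (ev D d) (ev C 0)) *
        (cpr P (ev D d) (ev C 1) *
            (cpr P (ev C 1) (ev X 0 ∩ ev Y 0) * cpr P (ev C 1) (ev X 1 ∩ ev Y 1) -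
              cpr P (ev C 1) (ev X 1 ∩ ev Y 0) * cpr P (ev C 1) (ev X 0 ∩ ev Y 1)) -
          cpr P (ev D d) (ev C 0) *
            (cpr P (ev C 0) (ev X 0 ∩ ev Y 0) * cpr P (ev C 0) (ev X 1 ∩ ev Y 1) -
              cpr P (ev C 0) (ev X 1 ∩ ev Y 0) * cpr P (ev C 0) (ev X 0 ∩ ev Y 1))) /
        ((pr P (ev Y 1) *
              (cpr P (ev C 1) (ev X 1 ∩ ev Y 1) * cpr P (ev D d) (ev C 1) +
                cpr P (ev C 0) (ev X 1 ∩ ev Y 1) * cpr P (ev D d) (ev C 0)) +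
            pr P (ev Y 0) *
              (cpr P (ev C 1) (ev X 1 ∩ ev Y 0) * cpr P (ev D d) (ev C 1) +
                cpr P (ev C 0) (ev X 1 ∩ ev Y 0) * cpr P (ev D d) (ev C 0))) *
          (pr P (ev Y 1) *
              (cpr P (ev C 1) (ev X 0 ∩ ev Y 1) * cpr P (ev D d) (ev C 1) +
                cpr P (ev C 0) (ev X 0 ∩ ev Y 1) * cpr P (ev D d) (ev C 0)) +
            pr P (ev Y 0) *
              (cpr P (ev C 1) (ev X 0 ∩ ev Y 0) * cpr P (ev D d) (ev C 1) +
                cpr P (ev C 0) (ev X 0 ∩ ev Y 0) * cpr P (ev D d) (ev C 0)))) := by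
  have h : IsYStructure P X Y C D := hfact
  have hq₁ : pr P (ev Y 1) ≠ 0 := hY1.ne'
  have hq₀ : pr P (ev Y 0) ≠ 0 := by linarith [hY.pr_ev_zero_add_one (P := P)]
  rw [h.pr_inter_ev hY hC (.inr rfl) hd] at h1
  rw [h.pr_inter_ev hY hC (.inl rfl) hd] at h0
  obtain ⟨hp₁, hm₁⟩ := mul_ne_zero_iff.mp h1.ne'
  obtain ⟨hp₀, hm₀⟩ := mul_ne_zero_iff.mp h0.ne'
  rw [h.cpr_ev_one hY hC (.inr rfl) hd hp₁, h.cpr_ev_one hY hC (.inl rfl) hd hp₀,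
    div_sub_div _ _ hm₁ hm₀]
  simp only [condProbD]
  rw [h.cpr_ev_zero_eq hY hC hD (.inr rfl) (.inr rfl) hp₁ hq₁,
    h.cpr_ev_zero_eq hY hC hD (.inr rfl) (.inl rfl) hp₁ hq₀,
    h.cpr_ev_zero_eq hY hC hD (.inl rfl) (.inr rfl) hp₀ hq₁,
    h.cpr_ev_zero_eq hY hC hD (.inl rfl) (.inl rfl) hp₀ hq₀]
  ring

/-- Y-bias on the risk difference scale, conditioning on `D = d`. -/
theorem Y_bias_rd (P : Measure Ω) [IsProbabilityMeasure P]
    (X Y C D : Ω → ℝ) (hX : IsBin X) (hY : IsBin Y) (hC : IsBin C) (hD : IsBin D)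
    (hX1 : 0 < pr P (ev X 1)) (hX1' : pr P (ev X 1) < 1)
    (hY1 : 0 < pr P (ev Y 1)) (hY1' : pr P (ev Y 1) < 1)
    (hfact : ∀ x y γ d : ℝ, (x = 0 ∨ x = 1) → (y = 0 ∨ y = 1) → (γ = 0 ∨ γ = 1) →
      (d = 0 ∨ d = 1) →
      pr P (ev X x ∩ ev Y y ∩ ev C γ ∩ ev D d) =
        pr P (ev X x) * pr P (ev Y y) * cpr P (ev C γ) (ev X x ∩ ev Y y) *
          cpr P (ev D d) (ev C γ))
    (d : ℝ) (hd : d = 0 ∨ d = 1)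
    (h1 : 0 < pr P (ev X 1 ∩ ev D d)) (h0 : 0 < pr P (ev X 0 ∩ ev D d)) :
    cpr P (ev Y 1) (ev X 1 ∩ ev D d) - cpr P (ev Y 1) (ev X 0 ∩ ev D d) =
      pr P (ev Y 1) * pr P (ev Y 0) *
        (cpr P (ev D d) (ev C 1) - cpr P (ev D d) (ev C 0)) *
        (cpr P (ev D d) (ev C 1) *
            (cpr P (ev C 1) (ev X 0 ∩ ev Y 0) * cpr P (ev C 1) (ev X 1 ∩ ev Y 1) -
              cpr P (ev C 1) (ev X 1 ∩ ev Y 0) * cpr P (ev C 1) (ev X 0 ∩ ev Y 1)) -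
          cpr P (ev D d) (ev C 0) *
            (cpr P (ev C 0) (ev X 0 ∩ ev Y 0) * cpr P (ev C 0) (ev X 1 ∩ ev Y 1) -
              cpr P (ev C 0) (ev X 1 ∩ ev Y 0) * cpr P (ev C 0) (ev X 0 ∩ ev Y 1))) /
        ((pr P (ev Y 1) *
              (cpr P (ev C 1) (ev X 1 ∩ ev Y 1) * cpr P (ev D d) (ev C 1) +
                cpr P (ev C 0) (ev X 1 ∩ ev Y 1) * cpr P (ev D d) (ev C 0)) +
            pr P (ev Y 0) *
              (cpr P (ev C 1) (ev X 1 ∩ ev Y 0) * cpr P (ev D d) (ev C 1) +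
                cpr P (ev C 0) (ev X 1 ∩ ev Y 0) * cpr P (ev D d) (ev C 0))) *
          (pr P (ev Y 1) *
              (cpr P (ev C 1) (ev X 0 ∩ ev Y 1) * cpr P (ev D d) (ev C 1) +
                cpr P (ev C 0) (ev X 0 ∩ ev Y 1) * cpr P (ev D d) (ev C 0)) +
            pr P (ev Y 0) *
              (cpr P (ev C 1) (ev X 0 ∩ ev Y 0) * cpr P (ev D d) (ev C 1) +
                cpr P (ev C 0) (ev X 0 ∩ ev Y 0) * cpr P (ev D d) (ev C 0)))) :=
  Y_bias_rd_general P X Y C D hY hC hD hY1 hY1' hfact d hd h1 h0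
end
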